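/- arXiv:2104.05389 — 2 statements merged into one kernel-verified Lean document; each statement's English description precedes it below -/
import Mathlib

section
/- For every nonnegative integer k, Γ(k+5/6)·Γ(k+1)·Γ(k+4/3)·Γ(k+7/6)·Γ(k+3/2)·Γ(k+5/3) / Γ(2k+5/2) = π² · (6k+4)! · (2k+1)! / (2^{2k−1} · 3^{6k+9/2} · (4k+3)!). -/
/-!
Grouping the six factors as `Γ(z) Γ(z + 1/3) Γ(z + 2/3)` with `z = k + 5/6` and `z = k + 1`,
Gauss's triplication formula `Γ(z) Γ(z + 1/3) Γ(z + 2/3) = 2π · 3^(1/2 - 3z) · Γ(3z)` turns the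
numerator into `4π² · 3^(-(6k + 9/2)) · Γ(3k + 5/2) · (3k + 2)!`. The triplication formula holds
at `z = 1/6` and `z = 1/3` by the reflection formula, and the functional equation carries it from
`z` to `z + 1/3`. Legendre's duplication formula then writes the half-integer values
`Γ(3k + 5/2)` and `Γ(2k + 5/2)` as factorials times `√π`.
-/

open Real

open Nat

namespace Real

theorem Gamma_nat_add_half_eq_factorial (n : ℕ) :
    Gamma (n + 1/2) = (2 * n)! * √π / (4 ^ n * n !) := by
  have hdup := Gamma_mul_Gamma_add_half (n + 1/2)
  rw [show 1 - 2 * ((n : ℝ) + 1/2) = -(2 * n : ℕ) by push_cast; ring,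
    show (n : ℝ) + 1/2 + 1/2 = n + 1 by ring,
    show 2 * ((n : ℝ) + 1/2) = (2 * n : ℕ) + 1 by push_cast; ring,
    Gamma_nat_eq_factorial, Gamma_nat_eq_factorial, rpow_neg zero_le_two, rpow_natCast, pow_mul,
    show (2 : ℝ) ^ 2 = 4 by norm_num] at hdup
  rw [eq_div_iff (by positivity), mul_left_comm, hdup]
  field_simp

def GammaTriplicationAt (z : ℝ) : Prop :=
  Gamma z * Gamma (z + 1/3) * Gamma (z + 2/3) = Gamma (3 * z) * (3 : ℝ) ^ (1/2 - 3 * z) * (2 * π)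

theorem GammaTriplicationAt.add_third {z : ℝ} (hz : 0 < z) (h : GammaTriplicationAt z) :
    GammaTriplicationAt (z + 1/3) := by
  unfold GammaTriplicationAt at *
  have hshift : Gamma (z + 1) = z * Gamma z := Gamma_add_one hz.ne'
  have hshift3 : Gamma (3 * z + 1) = 3 * z * Gamma (3 * z) := Gamma_add_one (by positivity)
  have hpow : (3 : ℝ) ^ (1/2 - 3 * z - 1) = (3 : ℝ) ^ (1/2 - 3 * z) / 3 :=
    rpow_sub_one (by norm_num) _
  rw [show z + 1/3 + 1/3 = z + 2/3 by ring, show z + 1/3 + 2/3 = z + 1 by ring,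
    show 3 * (z + 1/3) = 3 * z + 1 by ring, show 1/2 - (3 * z + 1) = 1/2 - 3 * z - 1 by ring,
    hshift, hshift3, hpow]
  linear_combination z * h

theorem GammaTriplicationAt.add_nat_div_three {z : ℝ} (hz : 0 < z) (h : GammaTriplicationAt z)
    (n : ℕ) : GammaTriplicationAt (z + n / 3) := by
  induction n with
  | zero => simpa using h
  | succ n ih =>
    rw [Nat.cast_succ, add_div, ← add_assoc]
    exact ih.add_third (by positivity)

theorem gammaTriplicationAt_one_sixth : GammaTriplicationAt (1/6) := by
  have hrefl := Gamma_mul_Gamma_one_sub (1/6)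
  rw [show π * (1/6) = π / 6 by ring, sin_pi_div_six,
    show (1 : ℝ) - 1/6 = 1/6 + 2/3 by norm_num] at hrefl
  unfold GammaTriplicationAt
  rw [show (1/6 : ℝ) + 1/3 = 1/2 by norm_num, show (3 : ℝ) * (1/6) = 1/2 by norm_num,
    show (1/2 : ℝ) - 1/2 = 0 by norm_num, rpow_zero, mul_right_comm, hrefl]
  ring

theorem gammaTriplicationAt_one_third : GammaTriplicationAt (1/3) := by
  have hrefl := Gamma_mul_Gamma_one_sub (1/3)
  rw [show π * (1/3) = π / 3 by ring, sin_pi_div_three,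
    show (1 : ℝ) - 1/3 = 1/3 + 1/3 by norm_num] at hrefl
  unfold GammaTriplicationAt
  have hpow : (3 : ℝ) ^ (1/2 - 1 : ℝ) = (√3)⁻¹ := by
    rw [show (1/2 - 1 : ℝ) = -(1/2) by norm_num, rpow_neg (by norm_num), sqrt_eq_rpow]
  rw [show (1/3 : ℝ) + 2/3 = 1 by norm_num, show (3 : ℝ) * (1/3) = 1 by norm_num, hpow, hrefl,
    Gamma_one]
  field_simp

theorem Gamma_triplication_nat_add_five_sixths (k : ℕ) :
    Gamma (k + 5/6) * Gamma (k + 7/6) * Gamma (k + 3/2) =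
      Gamma (3 * k + 5/2) * (3 : ℝ) ^ (-(3 * k + 2 : ℝ)) * (2 * π) := by
  have h := gammaTriplicationAt_one_sixth.add_nat_div_three (by norm_num) (3 * k + 2)
  rw [show (1/6 : ℝ) + (3 * k + 2 : ℕ) / 3 = k + 5/6 by push_cast; ring] at h
  unfold GammaTriplicationAt at h
  rwa [show (k : ℝ) + 5/6 + 1/3 = k + 7/6 by ring, show (k : ℝ) + 5/6 + 2/3 = k + 3/2 by ring,
    show (1/2 : ℝ) - 3 * (k + 5/6) = -(3 * k + 2) by ring,
    show 3 * ((k : ℝ) + 5/6) = 3 * k + 5/2 by ring] at h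

theorem Gamma_triplication_nat_add_one (k : ℕ) :
    Gamma (k + 1) * Gamma (k + 4/3) * Gamma (k + 5/3) =
      (3 * k + 2)! * (3 : ℝ) ^ (-(3 * k + 5/2 : ℝ)) * (2 * π) := by
  have h := gammaTriplicationAt_one_third.add_nat_div_three (by norm_num) (3 * k + 2)
  rw [show (1/3 : ℝ) + (3 * k + 2 : ℕ) / 3 = k + 1 by push_cast; ring] at h
  unfold GammaTriplicationAt at h
  rwa [show (k : ℝ) + 1 + 1/3 = k + 4/3 by ring, show (k : ℝ) + 1 + 2/3 = k + 5/3 by ring,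
    show (1/2 : ℝ) - 3 * (k + 1) = -(3 * k + 5/2) by ring,
    show 3 * ((k : ℝ) + 1) = (3 * k + 2 : ℕ) + 1 by push_cast; ring,
    Gamma_nat_eq_factorial (3 * k + 2)] at h

end Real

theorem wilson_norm (k : ℕ) :
    (Real.Gamma ((k : ℝ) + 5/6) * Real.Gamma ((k : ℝ) + 1) * Real.Gamma ((k : ℝ) + 4/3) *
      Real.Gamma ((k : ℝ) + 7/6) * Real.Gamma ((k : ℝ) + 3/2) * Real.Gamma ((k : ℝ) + 5/3)) /
        Real.Gamma (2 * (k : ℝ) + 5/2) =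
      Real.pi ^ 2 * (Nat.factorial (6 * k + 4)) * (Nat.factorial (2 * k + 1)) /
        ((2 : ℝ) ^ (2 * (k : ℝ) - 1) * (3 : ℝ) ^ (6 * (k : ℝ) + 9/2) *
          (Nat.factorial (4 * k + 3))) := by
  have hA := Gamma_triplication_nat_add_five_sixths k
  have hB := Gamma_triplication_nat_add_one k
  have hnum := Gamma_nat_add_half_eq_factorial (3 * k + 2)
  rw [show 2 * (3 * k + 2) = 6 * k + 4 by ring,
    show ((3 * k + 2 : ℕ) : ℝ) + 1/2 = 3 * k + 5/2 by push_cast; ring] at hnum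
  have hden := Gamma_nat_add_half_eq_factorial (2 * k + 2)
  rw [show 2 * (2 * k + 2) = 4 * k + 3 + 1 by ring, factorial_succ, factorial_succ (2 * k + 1),
    show ((2 * k + 2 : ℕ) : ℝ) + 1/2 = 2 * k + 5/2 by push_cast; ring] at hden
  have hpow3 : (3 : ℝ) ^ (3 * k + 2 : ℝ) * (3 : ℝ) ^ (3 * k + 5/2 : ℝ) =
      (3 : ℝ) ^ (6 * (k : ℝ) + 9/2) := by
    rw [← rpow_add (by norm_num)]; ring_nf
  have hpow2 : (2 : ℝ) ^ (2 * (k : ℝ) - 1) = 4 ^ k / 2 := by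
    rw [rpow_sub_one (by norm_num), rpow_mul (by norm_num)]; norm_num
  calc _ = (Gamma (k + 5/6) * Gamma (k + 7/6) * Gamma (k + 3/2)) *
        (Gamma (k + 1) * Gamma (k + 4/3) * Gamma (k + 5/3)) / Gamma (2 * k + 5/2) := by ring
    _ = _ := by
      rw [hA, hB, hnum, hden, hpow2, ← hpow3, rpow_neg (by norm_num), rpow_neg (by norm_num)]
      push_cast
      field_simp
      ring
end

section
/- Let N ≥ 1, let m ≥ 0 be an integer, and put n = N + m and c = m + 3/2. For complex numbers l₁, …, l_N, the N×N determinant det_{1≤k,j≤N}( (1−n+l_k)_{N−j} · (c+l_k)_{j−1} ) equals ∏_{j=1}^{N} (5/2 + 2n − 2j)_{j−1} · ∏_{1≤i<j≤N}(l_i − l_j). -/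
open Finset Polynomial

private lemma ascP_reflect (d : ℕ) (x : ℂ) :
    (ascPochhammer ℂ d).eval (1 - (d : ℂ) - x) = (-1) ^ d * (ascPochhammer ℂ d).eval x := by
  induction d generalizing x with
  | zero => simp
  | succ d ih =>
      have h1 : (ascPochhammer ℂ (d+1)).eval (1 - ((d:ℂ)+1) - x)
          = (1 - ((d:ℂ)+1) - x) * (ascPochhammer ℂ d).eval (1 - ((d:ℂ)+1) - x + 1) := by
        simp [ascPochhammer_succ_left, eval_comp]
      push_cast
      rw [h1, show (1 - ((d:ℂ)+1) - x + 1) = 1 - (d:ℂ) - x by ring, ih,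
        ascPochhammer_succ_eval]
      ring

private lemma ascP_neg_nat (j : ℕ) :
    (ascPochhammer ℂ j).eval (-(j:ℂ)) = (-1) ^ j * (Nat.factorial j : ℂ) := by
  have h := ascP_reflect j 1
  rw [ascPochhammer_eval_one] at h
  rw [show (-(j:ℂ)) = 1 - (j:ℂ) - 1 by ring, h]

private lemma ascP_zero_of_lt {k j : ℕ} (h : k < j) :
    (ascPochhammer ℂ j).eval (-(k:ℂ)) = 0 := by
  induction j with
  | zero => omega
  | succ j ih =>
      rw [ascPochhammer_succ_eval]
      rcases Nat.lt_succ_iff_lt_or_eq.mp h with h | h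
      · rw [ih h, zero_mul]
      · subst h; simp

private lemma matrix_factorization {N : ℕ} (p : Fin N → Polynomial ℂ)
    (h : ∀ j, (p j).natDegree < N) (l : Fin N → ℂ) :
    (Matrix.of fun k j : Fin N => (p j).eval (l k)) =
      Matrix.vandermonde l * Matrix.of (fun i j : Fin N => (p j).coeff i) := by
  ext k j
  rw [Matrix.mul_apply]
  simp only [Matrix.of_apply, Matrix.vandermonde_apply]
  rw [Polynomial.eval_eq_sum_range' (h j), ← Fin.sum_univ_eq_sum_range]
  exact Finset.sum_congr rfl fun i _ => mul_comm _ _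

private lemma pairs_prod {M : Type*} [CommMonoid M] {N : ℕ} (f : Fin N → Fin N → M) :
    ∏ p ∈ Finset.univ.filter (fun p : Fin N × Fin N => p.1 < p.2), f p.1 p.2 =
      ∏ i : Fin N, ∏ j ∈ Finset.Ioi i, f i j := by
  rw [Finset.prod_sigma']
  exact Finset.prod_nbij' (fun p => ⟨p.1, p.2⟩) (fun x => (x.1, x.2))
    (by simp) (by simp) (by simp) (by simp) (by simp)

private lemma swap_prod {M : Type*} [CommMonoid M] {N : ℕ} (f : Fin N → Fin N → M) :
    ∏ i : Fin N, ∏ j ∈ Finset.Ioi i, f i j = ∏ j : Fin N, ∏ i ∈ Finset.Iio j, f i j :=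
  Finset.prod_comm' (by simp)

private lemma Iio_fact {N : ℕ} (j : Fin N) :
    ∏ i ∈ Finset.Iio j, ((j : ℂ) - (i : ℂ)) = (Nat.factorial (j : ℕ) : ℂ) := by
  have h1 : ∏ i ∈ Finset.Iio j, ((j : ℂ) - (i : ℂ))
      = ∏ x ∈ Finset.range (j : ℕ), ((j : ℂ) - (x : ℂ)) := by
    rw [show Finset.range (j:ℕ) = (Finset.Iio j).map Fin.valEmbedding by
      rw [Fin.map_valEmbedding_Iio, Nat.Iio_eq_range], Finset.prod_map]
    rfl
  rw [h1]
  have h2 : ∀ x ∈ Finset.range (j : ℕ), ((j : ℂ) - (x : ℂ)) = (((j : ℕ) - x : ℕ) : ℂ) := by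
    intro x hx
    rw [Nat.cast_sub (le_of_lt (Finset.mem_range.mp hx))]
  rw [Finset.prod_congr rfl h2, ← Nat.cast_prod]
  congr 1
  have h3 : ∀ x ∈ Finset.range (j : ℕ), (j : ℕ) - x = ((j : ℕ) - 1 - x) + 1 := by
    intro x hx; have := Finset.mem_range.mp hx; omega
  rw [Finset.prod_congr rfl h3, Finset.prod_range_reflect (fun x => x + 1),
    Finset.prod_range_add_one_eq_factorial]

private lemma cast_sub_sub {N j : ℕ} (h : j < N) : ((N-1-j:ℕ):ℂ) = (N:ℂ) - 1 - j := by
  rw [show N - 1 - j = N - (1+j) by omega, Nat.cast_sub (by omega)]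
  push_cast; ring

private lemma key_prod (N m : ℕ) :
    ∏ j ∈ range N, ((-1:ℂ)^j * (ascPochhammer ℂ (N-1-j)).eval
      (1 - ((N+m:ℕ):ℂ) + (-(j:ℂ) - (m:ℂ) - 3/2)))
    = ∏ j ∈ range N, (ascPochhammer ℂ j).eval (5/2 + 2*((N+m:ℕ):ℂ) - 2*((j:ℂ)+1)) := by
  rw [Finset.prod_mul_distrib, ← Finset.prod_range_reflect (fun j => (-1:ℂ)^j) N,
    ← Finset.prod_mul_distrib]
  have step1 : ∀ j ∈ range N, (-1:ℂ)^(N-1-j) * (ascPochhammer ℂ (N-1-j)).eval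
      (1 - ((N+m:ℕ):ℂ) + (-(j:ℂ) - (m:ℂ) - 3/2))
      = (fun t => (ascPochhammer ℂ t).eval (2*((N-1-t:ℕ):ℂ)+2*(m:ℂ)+5/2)) (N-1-j) := by
    intro j hj
    have hj' := Finset.mem_range.mp hj
    simp only
    rw [← ascP_reflect]
    congr 1
    rw [show N-1-(N-1-j) = j by omega, cast_sub_sub hj']
    push_cast; ring
  rw [Finset.prod_congr rfl step1, Finset.prod_range_reflect
    (fun t => (ascPochhammer ℂ t).eval (2*((N-1-t:ℕ):ℂ)+2*(m:ℂ)+5/2)) N]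
  apply Finset.prod_congr rfl
  intro j hj
  have hj' := Finset.mem_range.mp hj
  congr 1
  rw [cast_sub_sub hj']
  push_cast; ring

theorem alternant_det (N m : ℕ) (hN : 1 ≤ N) (l : Fin N → ℂ) :
    Matrix.det (Matrix.of fun k j : Fin N =>
        (ascPochhammer ℂ (N - 1 - (j : ℕ))).eval (1 - ((N + m : ℕ) : ℂ) + l k) *
          (ascPochhammer ℂ (j : ℕ)).eval ((m : ℂ) + 3/2 + l k)) =
      (∏ j ∈ Finset.range N, (ascPochhammer ℂ j).eval
          (5/2 + 2 * ((N + m : ℕ) : ℂ) - 2 * ((j : ℂ) + 1))) *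
        ∏ p ∈ Finset.univ.filter (fun p : Fin N × Fin N => p.1 < p.2), (l p.1 - l p.2) := by
  classical
  set C : ℂ := ∏ j ∈ Finset.range N, (ascPochhammer ℂ j).eval
      (5/2 + 2 * ((N + m : ℕ) : ℂ) - 2 * ((j : ℂ) + 1)) with hC
  -- the polynomial family
  set q : Fin N → Polynomial ℂ := fun j =>
    ((ascPochhammer ℂ (N - 1 - (j:ℕ))).comp (Polynomial.C (1 - ((N + m : ℕ) : ℂ)) + X)) *
      ((ascPochhammer ℂ (j:ℕ)).comp (Polynomial.C ((m:ℂ) + 3/2) + X)) with hq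
  have hq_eval : ∀ (j : Fin N) (x : ℂ), (q j).eval x =
      (ascPochhammer ℂ (N - 1 - (j:ℕ))).eval (1 - ((N + m : ℕ) : ℂ) + x) *
        (ascPochhammer ℂ (j:ℕ)).eval ((m:ℂ) + 3/2 + x) := by
    intro j x
    simp [hq, eval_comp]
  have hdeg : ∀ j : Fin N, (q j).natDegree < N := by
    intro j
    have h1 : (q j).natDegree ≤ (N - 1 - (j:ℕ)) * 1 + (j:ℕ) * 1 := by
      refine le_trans (Polynomial.natDegree_mul_le) (add_le_add ?_ ?_)
      · refine le_trans (Polynomial.natDegree_comp_le) ?_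
        rw [ascPochhammer_natDegree, add_comm (Polynomial.C _) X, natDegree_X_add_C]
      · refine le_trans (Polynomial.natDegree_comp_le) ?_
        rw [ascPochhammer_natDegree, add_comm (Polynomial.C _) X, natDegree_X_add_C]
    have hj := j.2
    omega
  set A : Matrix (Fin N) (Fin N) ℂ := Matrix.of (fun i j : Fin N => (q j).coeff i) with hA
  have hdet : ∀ l' : Fin N → ℂ,
      Matrix.det (Matrix.of fun k j : Fin N =>
        (ascPochhammer ℂ (N - 1 - (j : ℕ))).eval (1 - ((N + m : ℕ) : ℂ) + l' k) *
          (ascPochhammer ℂ (j : ℕ)).eval ((m : ℂ) + 3/2 + l' k)) =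
      (Matrix.vandermonde l').det * A.det := by
    intro l'
    have heq : (Matrix.of fun k j : Fin N =>
        (ascPochhammer ℂ (N - 1 - (j : ℕ))).eval (1 - ((N + m : ℕ) : ℂ) + l' k) *
          (ascPochhammer ℂ (j : ℕ)).eval ((m : ℂ) + 3/2 + l' k)) =
        (Matrix.of fun k j : Fin N => (q j).eval (l' k)) := by
      ext k j
      simp only [Matrix.of_apply]
      rw [hq_eval]
    rw [heq, matrix_factorization q hdeg l', Matrix.det_mul]
  -- the special point
  set l₀ : Fin N → ℂ := fun k => -(k:ℂ) - (m:ℂ) - 3/2 with hl₀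
  -- lower triangularity at l₀
  have htri : Matrix.det (Matrix.of fun k j : Fin N =>
      (ascPochhammer ℂ (N - 1 - (j : ℕ))).eval (1 - ((N + m : ℕ) : ℂ) + l₀ k) *
        (ascPochhammer ℂ (j : ℕ)).eval ((m : ℂ) + 3/2 + l₀ k)) =
      ∏ j : Fin N, ((ascPochhammer ℂ (N - 1 - (j : ℕ))).eval (1 - ((N + m : ℕ) : ℂ) + l₀ j) *
        (ascPochhammer ℂ (j : ℕ)).eval ((m : ℂ) + 3/2 + l₀ j)) := by
    apply Matrix.det_of_lowerTriangular
    intro i j hij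
    have hij' : (i:ℕ) < (j:ℕ) := by
      have : i < j := by simpa using hij
      exact this
    simp only [Matrix.of_apply]
    have : (m:ℂ) + 3/2 + l₀ i = -((i:ℕ):ℂ) := by simp only [hl₀]; ring
    rw [this, ascP_zero_of_lt hij', mul_zero]
  -- value of the diagonal product
  have hdiag : ∏ j : Fin N, ((ascPochhammer ℂ (N - 1 - (j : ℕ))).eval
        (1 - ((N + m : ℕ) : ℂ) + l₀ j) *
        (ascPochhammer ℂ (j : ℕ)).eval ((m : ℂ) + 3/2 + l₀ j)) =
      C * ∏ j : Fin N, (Nat.factorial (j:ℕ) : ℂ) := by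
    have h1 : ∀ j : Fin N, (ascPochhammer ℂ (N - 1 - (j : ℕ))).eval
          (1 - ((N + m : ℕ) : ℂ) + l₀ j) *
          (ascPochhammer ℂ (j : ℕ)).eval ((m : ℂ) + 3/2 + l₀ j)
        = ((-1:ℂ)^(j:ℕ) * (ascPochhammer ℂ (N - 1 - (j:ℕ))).eval
            (1 - ((N+m:ℕ):ℂ) + (-((j:ℕ):ℂ) - (m:ℂ) - 3/2))) * (Nat.factorial (j:ℕ) : ℂ) := by
      intro j
      have h2 : (m:ℂ) + 3/2 + l₀ j = -((j:ℕ):ℂ) := by simp only [hl₀]; ring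
      have h3 : l₀ j = -((j:ℕ):ℂ) - (m:ℂ) - 3/2 := by simp only [hl₀]
      rw [h2, h3, ascP_neg_nat]
      ring
    rw [Finset.prod_congr rfl (fun j _ => h1 j), Finset.prod_mul_distrib]
    congr 1
    rw [Fin.prod_univ_eq_prod_range (fun t => (-1:ℂ)^t * (ascPochhammer ℂ (N - 1 - t)).eval
      (1 - ((N+m:ℕ):ℂ) + (-(t:ℂ) - (m:ℂ) - 3/2))) N]
    exact key_prod N m
  -- the pair product at l₀ equals the factorial product
  have hpairs₀ : (∏ p ∈ Finset.univ.filter (fun p : Fin N × Fin N => p.1 < p.2),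
      (l₀ p.1 - l₀ p.2)) = ∏ j : Fin N, (Nat.factorial (j:ℕ) : ℂ) := by
    rw [pairs_prod (fun i j => l₀ i - l₀ j)]
    have h1 : ∀ i : Fin N, ∀ j ∈ Finset.Ioi i, l₀ i - l₀ j = (j:ℂ) - (i:ℂ) := by
      intro i j _; simp only [hl₀]; ring
    rw [Finset.prod_congr rfl (fun i _ => Finset.prod_congr rfl (h1 i)),
      swap_prod (fun i j => (j:ℂ) - (i:ℂ))]
    exact Finset.prod_congr rfl (fun j _ => Iio_fact j)
  -- relate pair products to vandermonde determinants, via a constant sign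
  set s : ℂ := ∏ i : Fin N, ∏ j ∈ Finset.Ioi i, (-1:ℂ) with hs
  have hP : ∀ l' : Fin N → ℂ,
      (∏ p ∈ Finset.univ.filter (fun p : Fin N × Fin N => p.1 < p.2), (l' p.1 - l' p.2)) =
        s * (Matrix.vandermonde l').det := by
    intro l'
    rw [pairs_prod (fun i j => l' i - l' j), Matrix.det_vandermonde, hs,
      ← Finset.prod_mul_distrib]
    apply Finset.prod_congr rfl
    intro i _
    rw [← Finset.prod_mul_distrib]
    apply Finset.prod_congr rfl
    intro j _
    ring
  have hss : s * s = 1 := by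
    rw [hs, ← Finset.prod_mul_distrib]
    have : ∀ i : Fin N, (∏ j ∈ Finset.Ioi i, (-1:ℂ)) * (∏ j ∈ Finset.Ioi i, (-1:ℂ)) = 1 := by
      intro i
      rw [← Finset.prod_mul_distrib]
      simp
    exact Finset.prod_eq_one (fun i _ => this i)
  have hV₀ : (Matrix.vandermonde l₀).det ≠ 0 := by
    rw [Matrix.det_vandermonde_ne_zero_iff]
    intro a b hab
    simp only [hl₀] at hab
    have : ((a:ℕ):ℂ) = ((b:ℕ):ℂ) := by linear_combination -hab
    exact Fin.ext (Nat.cast_injective this)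
  -- determine A.det
  have hK : (Matrix.vandermonde l₀).det * A.det = (Matrix.vandermonde l₀).det * (C * s) := by
    rw [← hdet l₀, htri, hdiag, ← hpairs₀, hP l₀]
    ring
  have hAdet : A.det = C * s := mul_left_cancel₀ hV₀ hK
  rw [hdet l, hAdet, hP l]
  calc (Matrix.vandermonde l).det * (C * s) = C * ((s * s) * (s * (Matrix.vandermonde l).det)) := by
        rw [hss]; ring
    _ = C * (s * (Matrix.vandermonde l).det) := by rw [hss]; ring_nf
end
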